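/- For any permutation σ ∈ S_n, the number of descents of σ equals the number of distinct non-zero values appearing in the saillance code Sc(σ). -/

import Mathlib

open Finset

namespace Paper

/-- The word of `σ` at 0-based position `i`, with 0-based values (`0` outside range). -/
def wrd {n : ℕ} (σ : Equiv.Perm (Fin n)) (i : ℕ) : ℕ :=
  if h : i < n then (σ ⟨i, h⟩ : ℕ) else 0

/-- The descent set of `σ`, in 1-based positions: `{ i ∈ {1,…,n-1} | σ(i) > σ(i+1) }`. -/
def Des {n : ℕ} (σ : Equiv.Perm (Fin n)) : Finset ℕ :=
  (Finset.Ioo 0 n).filter fun i => wrd σ i < wrd σ (i - 1)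

/-- The major index: the sum of the (1-based) descent positions. -/
def maj {n : ℕ} (σ : Equiv.Perm (Fin n)) : ℕ := ∑ i ∈ Des σ, i

/-- The number of descents. -/
def des {n : ℕ} (σ : Equiv.Perm (Fin n)) : ℕ := (Des σ).card

/-- The number of inversions. -/
def inv {n : ℕ} (σ : Equiv.Perm (Fin n)) : ℕ :=
  (Finset.univ.filter fun p : Fin n × Fin n => p.1 < p.2 ∧ σ p.2 < σ p.1).card

/-- The Lehmer code, as a function `ℕ → ℕ` (0-based index, zero outside `[0, n)`):
`Lc σ i = #{ j > i | σ(j) < σ(i) }`. -/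
def Lc {n : ℕ} (σ : Equiv.Perm (Fin n)) (i : ℕ) : ℕ :=
  if h : i < n then (Finset.univ.filter fun j : Fin n => i < (j : ℕ) ∧ σ j < σ ⟨i, h⟩).card
  else 0

/-- The inversion code (invcode) is the Lehmer code of the inverse. -/
def Ic {n : ℕ} (σ : Equiv.Perm (Fin n)) : ℕ → ℕ := Lc σ⁻¹

/-- The word of a permutation, with 1-based values. -/
def word {n : ℕ} (σ : Equiv.Perm (Fin n)) : List ℕ := List.ofFn fun i => (σ i : ℕ) + 1

/-- The major index of a word: the sum of the 1-based positions `t` with `w_t > w_{t+1}`. -/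
def majL (l : List ℕ) : ℕ :=
  ∑ t ∈ Finset.range (l.length - 1), if l.getD (t + 1) 0 < l.getD t 0 then t + 1 else 0

/-- The major code, as a function `ℕ → ℕ` (0-based index `i`, i.e. paper's `m_{i+1}`):
`m_i = maj(σ^{(i)}) - maj(σ^{(i+1)})` where `σ^{(i)}` keeps only the letters `≥ i`. -/
def Mc {n : ℕ} (σ : Equiv.Perm (Fin n)) (i : ℕ) : ℕ :=
  majL ((word σ).filter fun x => decide (i + 1 ≤ x)) -
    majL ((word σ).filter fun x => decide (i + 2 ≤ x))

/-- The saillance code, as a function `ℕ → ℕ` (0-based index `i`, i.e. about the letter of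
0-based value `i`): the number of letters of `σ` that are `≥` the rightmost letter located to
the left of `i` and greater than `i` (0 if there is no such letter). -/
def Sc {n : ℕ} (σ : Equiv.Perm (Fin n)) (i : ℕ) : ℕ :=
  if h : i < n then
    let L := Finset.univ.filter fun j : Fin n => j < σ⁻¹ ⟨i, h⟩ ∧ (⟨i, h⟩ : Fin n) < σ j
    if hL : L.Nonempty then n - (σ (L.max' hL) : ℕ) else 0
  else 0

/-- Sub-diagonal sequences, as functions `ℕ → ℕ` supported on `[0, n)` with
`c_i ≤ n - 1 - i` there (0-based; i.e. `0 ≤ c_i ≤ n - i` in 1-based indexing). -/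
def SubDiag (n : ℕ) : Set (ℕ → ℕ) :=
  {c | (∀ i, i < n → c i + i < n) ∧ ∀ i, n ≤ i → c i = 0}

/-- The permutation `τ_M(β)` of `{0,…,n}`: `τ_M(β)(i) = des(β) - j` if `i` is the `j`-th
descent of `β`, and `τ_M(β)(i) = des(β) + j - 1` if `i` is the `j`-th rise (position `0`
counting as a rise). -/
def tauM {n : ℕ} (β : Equiv.Perm (Fin n)) (i : ℕ) : ℕ :=
  if i ∈ Des β then des β - ((Des β).filter fun d => d ≤ i).card
  else des β + ((Finset.range (i + 1)).filter fun r => r ∉ Des β).card - 1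

/-- The permutation `τ_S(β)` of `{0,…,n}`: `τ_S(β)(0) = 0` and `τ_S(β)(i) = n + 1 - β(i)`
(1-based values) for `1 ≤ i ≤ n`. -/
def tauS {n : ℕ} (β : Equiv.Perm (Fin n)) (i : ℕ) : ℕ :=
  if h : 1 ≤ i ∧ i ≤ n then n - (β ⟨i - 1, by omega⟩ : ℕ) else 0

/-- The complete homogeneous symmetric polynomial `h_k(X_m)` in the variables
`x_0, …, x_m`. -/
noncomputable def hpoly (k m : ℕ) : MvPolynomial ℕ ℤ :=
  ∑ f ∈ Finset.univ.filter (fun f : Fin k → Fin (m + 1) => ∀ a b : Fin k, a ≤ b → f a ≤ f b),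
    ∏ t : Fin k, MvPolynomial.X ((f t : ℕ))

/-- The (proper) descent set of a composition `I = (i_1,…,i_r)`:
`{i_1, i_1+i_2, …, i_1+⋯+i_{r-1}}`. -/
def DesComp (I : List ℕ) : Finset ℕ :=
  (Finset.range (I.length - 1)).image fun k => (I.take (k + 1)).sum

end Paper

/-!
If `Sc σ i ≠ 0`, let `p` be the rightmost position to the left of the letter `i` that carries a
letter larger than `i`. The letter at `p + 1` is then at most `i`, so `p + 1` is a descent, and
`Sc σ i = n - σ(p)`. Conversely, the letter `σ(d)` at a descent `d` has `d - 1` as that rightmost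
position, so `Sc σ (σ d) = n - σ(d - 1)`. Hence the non-zero values of the code are exactly the
numbers `n - σ(d - 1)` for the descents `d`, and these are pairwise distinct.
-/

namespace Paper

variable {n : ℕ} (σ : Equiv.Perm (Fin n))

lemma wrd_of_lt {i : ℕ} (hi : i < n) : wrd σ i = σ ⟨i, hi⟩ := dif_pos hi

lemma wrd_lt {i : ℕ} (hi : i < n) : wrd σ i < n := by
  rw [wrd_of_lt σ hi]
  exact Fin.isLt _

lemma wrd_injOn : Set.InjOn (wrd σ) (Set.Iio n) := by
  intro i hi j hj h
  rw [wrd_of_lt σ hi, wrd_of_lt σ hj] at h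
  exact Fin.mk.inj_iff.1 (σ.injective (Fin.ext h))

lemma mem_Des {d : ℕ} : d ∈ Des σ ↔ 0 < d ∧ d < n ∧ wrd σ d < wrd σ (d - 1) := by
  simp [Des, and_assoc]

def leftGreater (i : Fin n) : Finset (Fin n) :=
  univ.filter fun j => j < σ⁻¹ i ∧ i < σ j

lemma mem_leftGreater {i j : Fin n} : j ∈ leftGreater σ i ↔ j < σ⁻¹ i ∧ i < σ j := by
  simp [leftGreater]

lemma Sc_of_nonempty {i : Fin n} (h : (leftGreater σ i).Nonempty) :
    Sc σ i = n - σ ((leftGreater σ i).max' h) := by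
  simp only [Sc, Fin.is_lt, dif_pos, Fin.eta]
  exact dif_pos h

lemma Sc_of_not_nonempty {i : Fin n} (h : ¬(leftGreater σ i).Nonempty) : Sc σ i = 0 := by
  simp only [Sc, Fin.is_lt, dif_pos, Fin.eta]
  exact dif_neg h

lemma Sc_wrd_of_mem_Des {d : ℕ} (hd : d ∈ Des σ) : Sc σ (wrd σ d) = n - wrd σ (d - 1) := by
  obtain ⟨hd0, hdn, hdes⟩ := (mem_Des σ).1 hd
  have hd1 : d - 1 < n := by omega
  rw [wrd_of_lt σ hdn, wrd_of_lt σ hd1] at hdes ⊢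
  have hleft (j : Fin n) :
      j ∈ leftGreater σ (σ ⟨d, hdn⟩) ↔ (j : ℕ) < d ∧ σ ⟨d, hdn⟩ < σ j := by
    rw [mem_leftGreater, Equiv.Perm.coe_inv, Equiv.symm_apply_apply, Fin.lt_def]
  have hmem : (⟨d - 1, hd1⟩ : Fin n) ∈ leftGreater σ (σ ⟨d, hdn⟩) :=
    (hleft _).2 ⟨Nat.sub_lt hd0 one_pos, hdes⟩
  have hmax : (leftGreater σ (σ ⟨d, hdn⟩)).max' ⟨_, hmem⟩ = ⟨d - 1, hd1⟩ := by
    refine le_antisymm (max'_le _ _ _ fun j hj => ?_) (le_max' _ _ hmem)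
    exact Fin.le_def.2 (Nat.le_sub_one_of_lt ((hleft j).1 hj).1)
  rw [Sc_of_nonempty σ ⟨_, hmem⟩, hmax]

lemma exists_mem_Des_of_Sc_ne_zero {i : ℕ} (h : Sc σ i ≠ 0) :
    ∃ d ∈ Des σ, n - wrd σ (d - 1) = Sc σ i := by
  have hi : i < n := by
    by_contra hi
    simp [Sc, hi] at h
  obtain ⟨i, rfl⟩ : ∃ i' : Fin n, (i' : ℕ) = i := ⟨⟨i, hi⟩, rfl⟩
  have hne : (leftGreater σ i).Nonempty := by
    by_contra hL
    exact h (Sc_of_not_nonempty σ hL)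
  set p := (leftGreater σ i).max' hne
  obtain ⟨hp_left, hp_greater⟩ := (mem_leftGreater σ).1 (max'_mem _ hne)
  rw [Fin.lt_def] at hp_left
  have hp1 : (p : ℕ) + 1 < n := by omega
  have hnext : σ ⟨p + 1, hp1⟩ ≤ i := by
    by_contra! hgt
    rcases (show (p : ℕ) + 1 = σ⁻¹ i ∨ (p : ℕ) + 1 < σ⁻¹ i by omega) with heq | hlt
    · have : (⟨p + 1, hp1⟩ : Fin n) = σ⁻¹ i := Fin.ext heq
      simp [this] at hgt
    · have hmem : (⟨p + 1, hp1⟩ : Fin n) ∈ leftGreater σ i := by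
        simp only [leftGreater, mem_filter, mem_univ, true_and]
        exact ⟨Fin.lt_def.2 hlt, hgt⟩
      exact (le_max' _ _ hmem).not_gt (Fin.lt_def.2 (Nat.lt_succ_self p))
  refine ⟨p + 1, (mem_Des σ).2 ⟨by omega, hp1, ?_⟩, ?_⟩
  · rw [wrd_of_lt σ hp1, Nat.add_sub_cancel, wrd_of_lt σ p.isLt]
    exact lt_of_le_of_lt hnext hp_greater
  · rw [Nat.add_sub_cancel, wrd_of_lt σ p.isLt, Sc_of_nonempty σ hne]

lemma injOn_sub_wrd_pred_Des : Set.InjOn (fun d => n - wrd σ (d - 1)) (Des σ) := by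
  intro a ha b hb hab
  obtain ⟨ha0, han, -⟩ := (mem_Des σ).1 ha
  obtain ⟨hb0, hbn, -⟩ := (mem_Des σ).1 hb
  have hwa := wrd_lt σ (show a - 1 < n by omega)
  have hwb := wrd_lt σ (show b - 1 < n by omega)
  have : a - 1 = b - 1 :=
    wrd_injOn σ (show a - 1 < n by omega) (show b - 1 < n by omega) (by simp only at hab; omega)
  omega

lemma filter_ne_zero_image_Sc :
    ((range n).image (Sc σ)).filter (· ≠ 0) = (Des σ).image fun d => n - wrd σ (d - 1) := by
  ext v
  simp only [mem_filter, mem_image, mem_range]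
  constructor
  · rintro ⟨⟨i, -, rfl⟩, hne⟩
    exact exists_mem_Des_of_Sc_ne_zero σ hne
  · rintro ⟨d, hd, rfl⟩
    obtain ⟨-, hdn, -⟩ := (mem_Des σ).1 hd
    refine ⟨⟨wrd σ d, wrd_lt σ hdn, Sc_wrd_of_mem_Des σ hd⟩, ?_⟩
    have := wrd_lt σ (show d - 1 < n by omega)
    omega

end Paper

/-- The number of descents of `σ` equals the number of distinct non-zero values appearing
in its saillance code. -/
theorem des_eq_card_nonzero_values_scode (n : ℕ) (σ : Equiv.Perm (Fin n)) :
    ((((Finset.range n).image (Paper.Sc σ))).filter fun v => v ≠ 0).card = Paper.des σ := by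
  rw [Paper.filter_ne_zero_image_Sc, Paper.des,
    card_image_of_injOn (Paper.injOn_sub_wrd_pred_Des σ)]
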